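/- Let α, ξ, φ be smooth functions of (x,y,t) satisfying Xξ − Yφ = 0, Yξ + Xφ = 0, Δ_{H¹}ξ = 2Xα and Δ_{H¹}φ = 2Yα, where Xu = u_x + 2y u_t, Yu = u_y − 2x u_t, Δ_{H¹} = X²+Y². Then Xα = −2 φ_t and Yα = 2 ξ_t. -/

import Mathlib

noncomputable def px (u : ℝ → ℝ → ℝ → ℝ) (x y t : ℝ) : ℝ := deriv (fun s => u s y t) x
noncomputable def py (u : ℝ → ℝ → ℝ → ℝ) (x y t : ℝ) : ℝ := deriv (fun s => u x s t) y
noncomputable def pt (u : ℝ → ℝ → ℝ → ℝ) (x y t : ℝ) : ℝ := deriv (fun s => u x y s) t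

noncomputable def Xop (u : ℝ → ℝ → ℝ → ℝ) : ℝ → ℝ → ℝ → ℝ :=
  fun x y t => px u x y t + 2 * y * pt u x y t
noncomputable def Yop (u : ℝ → ℝ → ℝ → ℝ) : ℝ → ℝ → ℝ → ℝ :=
  fun x y t => py u x y t - 2 * x * pt u x y t
noncomputable def Tder (u : ℝ → ℝ → ℝ → ℝ) : ℝ → ℝ → ℝ → ℝ :=
  fun x y t => pt u x y t
noncomputable def DeltaH (u : ℝ → ℝ → ℝ → ℝ) : ℝ → ℝ → ℝ → ℝ :=
  fun x y t => Xop (Xop u) x y t + Yop (Yop u) x y t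

def Smooth3 (u : ℝ → ℝ → ℝ → ℝ) : Prop :=
  ContDiff ℝ (⊤ : ℕ∞) (fun p : ℝ × ℝ × ℝ => u p.1 p.2.1 p.2.2)

noncomputable def Fn (u : ℝ → ℝ → ℝ → ℝ) : ℝ × ℝ × ℝ → ℝ := fun p => u p.1 p.2.1 p.2.2

variable {u : ℝ → ℝ → ℝ → ℝ} {x y t : ℝ}

lemma hda_x (hu : Smooth3 u) (x y t : ℝ) :
    HasDerivAt (fun s => u s y t) (fderiv ℝ (Fn u) (x, y, t) (1, 0, 0)) x :=
  ((hu.differentiable (by simp) (x, y, t)).hasFDerivAt).comp_hasDerivAt x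
      (f := fun s : ℝ => (((s, y, t) : ℝ × ℝ × ℝ)))
    ((hasDerivAt_id x).prodMk (hasDerivAt_const x (y, t)))

lemma hda_y (hu : Smooth3 u) (x y t : ℝ) :
    HasDerivAt (fun s => u x s t) (fderiv ℝ (Fn u) (x, y, t) (0, 1, 0)) y :=
  ((hu.differentiable (by simp) (x, y, t)).hasFDerivAt).comp_hasDerivAt y
      (f := fun s : ℝ => (((x, s, t) : ℝ × ℝ × ℝ)))
    ((hasDerivAt_const y x).prodMk ((hasDerivAt_id y).prodMk (hasDerivAt_const y t)))

lemma hda_t (hu : Smooth3 u) (x y t : ℝ) :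
    HasDerivAt (fun s => u x y s) (fderiv ℝ (Fn u) (x, y, t) (0, 0, 1)) t :=
  ((hu.differentiable (by simp) (x, y, t)).hasFDerivAt).comp_hasDerivAt t
      (f := fun s : ℝ => (((x, y, s) : ℝ × ℝ × ℝ)))
    ((hasDerivAt_const t x).prodMk ((hasDerivAt_const t y).prodMk (hasDerivAt_id t)))

lemma px_eq (hu : Smooth3 u) (x y t : ℝ) :
    px u x y t = fderiv ℝ (Fn u) (x, y, t) (1, 0, 0) := (hda_x hu x y t).deriv
lemma py_eq (hu : Smooth3 u) (x y t : ℝ) :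
    py u x y t = fderiv ℝ (Fn u) (x, y, t) (0, 1, 0) := (hda_y hu x y t).deriv
lemma pt_eq (hu : Smooth3 u) (x y t : ℝ) :
    pt u x y t = fderiv ℝ (Fn u) (x, y, t) (0, 0, 1) := (hda_t hu x y t).deriv

lemma hasDerivAt_px (hu : Smooth3 u) (x y t : ℝ) :
    HasDerivAt (fun s => u s y t) (px u x y t) x := by
  rw [px_eq hu]; exact hda_x hu x y t
lemma hasDerivAt_py (hu : Smooth3 u) (x y t : ℝ) :
    HasDerivAt (fun s => u x s t) (py u x y t) y := by
  rw [py_eq hu]; exact hda_y hu x y t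
lemma hasDerivAt_pt (hu : Smooth3 u) (x y t : ℝ) :
    HasDerivAt (fun s => u x y s) (pt u x y t) t := by
  rw [pt_eq hu]; exact hda_t hu x y t

lemma smooth_apply (hu : Smooth3 u) (v : ℝ × ℝ × ℝ) :
    ContDiff ℝ (⊤ : ℕ∞) (fun p : ℝ × ℝ × ℝ => fderiv ℝ (Fn u) p v) := by
  have h : ContDiff ℝ (⊤ : ℕ∞) (fderiv ℝ (Fn u)) :=
    (hu : ContDiff ℝ (⊤ : ℕ∞) (Fn u)).fderiv_right (by simp)
  exact h.clm_apply contDiff_const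

lemma smooth_px (hu : Smooth3 u) : Smooth3 (px u) := by
  have : (fun p : ℝ × ℝ × ℝ => px u p.1 p.2.1 p.2.2)
      = fun p : ℝ × ℝ × ℝ => fderiv ℝ (Fn u) p (1, 0, 0) :=
    funext fun p => px_eq hu p.1 p.2.1 p.2.2
  unfold Smooth3; rw [this]; exact smooth_apply hu _
lemma smooth_py (hu : Smooth3 u) : Smooth3 (py u) := by
  have : (fun p : ℝ × ℝ × ℝ => py u p.1 p.2.1 p.2.2)
      = fun p : ℝ × ℝ × ℝ => fderiv ℝ (Fn u) p (0, 1, 0) :=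
    funext fun p => py_eq hu p.1 p.2.1 p.2.2
  unfold Smooth3; rw [this]; exact smooth_apply hu _
lemma smooth_pt (hu : Smooth3 u) : Smooth3 (pt u) := by
  have : (fun p : ℝ × ℝ × ℝ => pt u p.1 p.2.1 p.2.2)
      = fun p : ℝ × ℝ × ℝ => fderiv ℝ (Fn u) p (0, 0, 1) :=
    funext fun p => pt_eq hu p.1 p.2.1 p.2.2
  unfold Smooth3; rw [this]; exact smooth_apply hu _

/-- second derivative symmetry for `Fn u`. -/
lemma snd_symm (hu : Smooth3 u) (p : ℝ × ℝ × ℝ) (v w : ℝ × ℝ × ℝ) :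
    fderiv ℝ (fderiv ℝ (Fn u)) p v w = fderiv ℝ (fderiv ℝ (Fn u)) p w v := by
  have h1 : ∀ q, HasFDerivAt (Fn u) (fderiv ℝ (Fn u) q) q :=
    fun q => (hu.differentiable (by simp) q).hasFDerivAt
  have h2 : HasFDerivAt (fderiv ℝ (Fn u)) (fderiv ℝ (fderiv ℝ (Fn u)) p) p :=
    (((hu : ContDiff ℝ (⊤ : ℕ∞) (Fn u)).fderiv_right (by simp)).differentiable (by simp : ((⊤ : ℕ∞) : WithTop ℕ∞) ≠ 0) p).hasFDerivAt
  exact second_derivative_symmetric h1 h2 v w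

/-- derivative along first coordinate of `p ↦ fderiv (Fn u) p v`. -/
lemma dslice (hu : Smooth3 u) (v : ℝ × ℝ × ℝ) (p : ℝ × ℝ × ℝ) (w : ℝ × ℝ × ℝ)
    (γ : ℝ → ℝ × ℝ × ℝ) (s₀ : ℝ) (hγ : HasDerivAt γ w s₀) (hp : γ s₀ = p) :
    HasDerivAt (fun s => fderiv ℝ (Fn u) (γ s) v)
      (fderiv ℝ (fderiv ℝ (Fn u)) p w v) s₀ := by
  have h2 : HasFDerivAt (fderiv ℝ (Fn u)) (fderiv ℝ (fderiv ℝ (Fn u)) p) p :=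
    (((hu : ContDiff ℝ (⊤ : ℕ∞) (Fn u)).fderiv_right (by simp)).differentiable (by simp : ((⊤ : ℕ∞) : WithTop ℕ∞) ≠ 0) p).hasFDerivAt
  subst hp
  have h3 := ((ContinuousLinearMap.apply ℝ ℝ v).hasFDerivAt.comp (γ s₀) h2).comp_hasDerivAt s₀ hγ
  exact h3

lemma lineX (x y t : ℝ) : HasDerivAt (fun s : ℝ => ((s, y, t) : ℝ × ℝ × ℝ)) (1, 0, 0) x :=
  (hasDerivAt_id x).prodMk (hasDerivAt_const x (y, t))
lemma lineY (x y t : ℝ) : HasDerivAt (fun s : ℝ => ((x, s, t) : ℝ × ℝ × ℝ)) (0, 1, 0) y :=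
  (hasDerivAt_const y x).prodMk ((hasDerivAt_id y).prodMk (hasDerivAt_const y t))
lemma lineT (x y t : ℝ) : HasDerivAt (fun s : ℝ => ((x, y, s) : ℝ × ℝ × ℝ)) (0, 0, 1) t :=
  (hasDerivAt_const t x).prodMk ((hasDerivAt_const t y).prodMk (hasDerivAt_id t))

lemma px_of (hu : Smooth3 u) (v : ℝ × ℝ × ℝ) (x y t : ℝ)
    (w : ℝ → ℝ → ℝ → ℝ) (hw : ∀ a b c, w a b c = fderiv ℝ (Fn u) (a, b, c) v) :
    px w x y t = fderiv ℝ (fderiv ℝ (Fn u)) (x, y, t) (1, 0, 0) v := by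
  show deriv (fun s => w s y t) x = _
  have e : (fun s => w s y t) = fun s => fderiv ℝ (Fn u) (s, y, t) v :=
    funext fun s => hw s y t
  rw [e]; exact (dslice hu v (x, y, t) (1, 0, 0) _ x (lineX x y t) rfl).deriv

lemma py_of (hu : Smooth3 u) (v : ℝ × ℝ × ℝ) (x y t : ℝ)
    (w : ℝ → ℝ → ℝ → ℝ) (hw : ∀ a b c, w a b c = fderiv ℝ (Fn u) (a, b, c) v) :
    py w x y t = fderiv ℝ (fderiv ℝ (Fn u)) (x, y, t) (0, 1, 0) v := by
  show deriv (fun s => w x s t) y = _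
  have e : (fun s => w x s t) = fun s => fderiv ℝ (Fn u) (x, s, t) v :=
    funext fun s => hw x s t
  rw [e]; exact (dslice hu v (x, y, t) (0, 1, 0) _ y (lineY x y t) rfl).deriv

lemma pt_of (hu : Smooth3 u) (v : ℝ × ℝ × ℝ) (x y t : ℝ)
    (w : ℝ → ℝ → ℝ → ℝ) (hw : ∀ a b c, w a b c = fderiv ℝ (Fn u) (a, b, c) v) :
    pt w x y t = fderiv ℝ (fderiv ℝ (Fn u)) (x, y, t) (0, 0, 1) v := by
  show deriv (fun s => w x y s) t = _
  have e : (fun s => w x y s) = fun s => fderiv ℝ (Fn u) (x, y, s) v :=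
    funext fun s => hw x y s
  rw [e]; exact (dslice hu v (x, y, t) (0, 0, 1) _ t (lineT x y t) rfl).deriv

lemma mixed_xy (hu : Smooth3 u) (x y t : ℝ) : px (py u) x y t = py (px u) x y t := by
  rw [px_of hu (0,1,0) x y t (py u) (fun a b c => py_eq hu a b c),
      py_of hu (1,0,0) x y t (px u) (fun a b c => px_eq hu a b c)]
  exact snd_symm hu (x, y, t) _ _

lemma mixed_xt (hu : Smooth3 u) (x y t : ℝ) : px (pt u) x y t = pt (px u) x y t := by
  rw [px_of hu (0,0,1) x y t (pt u) (fun a b c => pt_eq hu a b c),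
      pt_of hu (1,0,0) x y t (px u) (fun a b c => px_eq hu a b c)]
  exact snd_symm hu (x, y, t) _ _

lemma mixed_yt (hu : Smooth3 u) (x y t : ℝ) : py (pt u) x y t = pt (py u) x y t := by
  rw [py_of hu (0,0,1) x y t (pt u) (fun a b c => pt_eq hu a b c),
      pt_of hu (0,1,0) x y t (py u) (fun a b c => py_eq hu a b c)]
  exact snd_symm hu (x, y, t) _ _

lemma two_s (x : ℝ) : HasDerivAt (fun s : ℝ => 2 * s) 2 x := by
  simpa using (hasDerivAt_id x).const_mul (2 : ℝ)

lemma px_Yop (hu : Smooth3 u) (x y t : ℝ) :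
    px (Yop u) x y t
      = px (py u) x y t - (2 * pt u x y t + 2 * x * px (pt u) x y t) := by
  have h1 := hasDerivAt_px (smooth_py hu) x y t
  have h2 := hasDerivAt_px (smooth_pt hu) x y t
  have h3 := (two_s x).mul h2
  exact (h1.sub h3).deriv

lemma pt_Yop (hu : Smooth3 u) (x y t : ℝ) :
    pt (Yop u) x y t = pt (py u) x y t - 2 * x * pt (pt u) x y t := by
  have h1 := hasDerivAt_pt (smooth_py hu) x y t
  have h2 := (hasDerivAt_pt (smooth_pt hu) x y t).const_mul (2 * x)
  exact (h1.sub h2).deriv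

lemma py_Xop (hu : Smooth3 u) (x y t : ℝ) :
    py (Xop u) x y t
      = py (px u) x y t + (2 * pt u x y t + 2 * y * py (pt u) x y t) := by
  have h1 := hasDerivAt_py (smooth_px hu) x y t
  have h2 := hasDerivAt_py (smooth_pt hu) x y t
  have h3 := (two_s y).mul h2
  exact (h1.add h3).deriv

lemma pt_Xop (hu : Smooth3 u) (x y t : ℝ) :
    pt (Xop u) x y t = pt (px u) x y t + 2 * y * pt (pt u) x y t := by
  have h1 := hasDerivAt_pt (smooth_px hu) x y t
  have h2 := (hasDerivAt_pt (smooth_pt hu) x y t).const_mul (2 * y)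
  exact (h1.add h2).deriv

lemma comm3 (hu : Smooth3 u) (x y t : ℝ) :
    Xop (Yop u) x y t - Yop (Xop u) x y t = -(4 * pt u x y t) := by
  show (px (Yop u) x y t + 2 * y * pt (Yop u) x y t)
      - (py (Xop u) x y t - 2 * x * pt (Xop u) x y t) = _
  rw [px_Yop hu, pt_Yop hu, py_Xop hu, pt_Xop hu, mixed_xy hu, mixed_xt hu, mixed_yt hu]
  ring

lemma px_neg (v : ℝ → ℝ → ℝ → ℝ) (x y t : ℝ) :
    px (fun a b c => -(v a b c)) x y t = -(px v x y t) := by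
  show deriv (fun s => -(v s y t)) x = _; rw [deriv.fun_neg]; rfl
lemma py_neg (v : ℝ → ℝ → ℝ → ℝ) (x y t : ℝ) :
    py (fun a b c => -(v a b c)) x y t = -(py v x y t) := by
  show deriv (fun s => -(v x s t)) y = _; rw [deriv.fun_neg]; rfl
lemma pt_neg (v : ℝ → ℝ → ℝ → ℝ) (x y t : ℝ) :
    pt (fun a b c => -(v a b c)) x y t = -(pt v x y t) := by
  show deriv (fun s => -(v x y s)) t = _; rw [deriv.fun_neg]; rfl

lemma Xop_neg (v : ℝ → ℝ → ℝ → ℝ) (x y t : ℝ) :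
    Xop (fun a b c => -(v a b c)) x y t = -(Xop v x y t) := by
  show px _ x y t + 2 * y * pt _ x y t = _
  rw [px_neg, pt_neg]; show _ = -(px v x y t + 2 * y * pt v x y t); ring
lemma Yop_neg (v : ℝ → ℝ → ℝ → ℝ) (x y t : ℝ) :
    Yop (fun a b c => -(v a b c)) x y t = -(Yop v x y t) := by
  show py _ x y t - 2 * x * pt _ x y t = _
  rw [py_neg, pt_neg]; show _ = -(py v x y t - 2 * x * pt v x y t); ring

theorem stmt8 (α ξ φ : ℝ → ℝ → ℝ → ℝ)
    (hα : Smooth3 α) (hξ : Smooth3 ξ) (hφ : Smooth3 φ)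
    (hCR1 : ∀ x y t : ℝ, Xop ξ x y t - Yop φ x y t = 0)
    (hCR2 : ∀ x y t : ℝ, Yop ξ x y t + Xop φ x y t = 0)
    (h29 : ∀ x y t : ℝ, DeltaH ξ x y t = 2 * Xop α x y t)
    (h30 : ∀ x y t : ℝ, DeltaH φ x y t = 2 * Yop α x y t) :
    (∀ x y t : ℝ, Xop α x y t = -2 * pt φ x y t) ∧
    (∀ x y t : ℝ, Yop α x y t = 2 * pt ξ x y t) := by
  have e1 : Xop ξ = Yop φ := by
    funext a b c; have := hCR1 a b c; linarith
  have e2 : Yop ξ = fun a b c => -(Xop φ a b c) := by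
    funext a b c; have := hCR2 a b c; linarith
  have e3 : Xop φ = fun a b c => -(Yop ξ a b c) := by
    funext a b c; have := hCR2 a b c; linarith
  constructor
  · intro x y t
    have hD : DeltaH ξ x y t = -(4 * pt φ x y t) := by
      show Xop (Xop ξ) x y t + Yop (Yop ξ) x y t = _
      rw [e1, e2, Yop_neg]
      have := comm3 hφ x y t
      linarith
    have := h29 x y t
    rw [hD] at this; linarith
  · intro x y t
    have hD : DeltaH φ x y t = 4 * pt ξ x y t := by
      show Xop (Xop φ) x y t + Yop (Yop φ) x y t = _
      rw [e3, Xop_neg, ← e1]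
      have := comm3 hξ x y t
      linarith
    have := h30 x y t
    rw [hD] at this; linarith
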